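/- In the q-wedge quotient V(z)∧_q V(z) (quotient of V(z)⊗V(z) by Ker(T+1)), the relation u_l ∧ u_m = −u_m ∧ u_l holds whenever l ≡ m (mod n); in particular u_l ∧ u_l = 0. -/

import Mathlib

noncomputable section

/-- The color `j ∈ {1,…,n}` of the basis vector `u_l = z^a v_j` (`l = j − a n`). -/
def col (n : ℕ) (l : ℤ) : ℤ := (l - 1) % (n : ℤ) + 1

/-- The exponent `a` of the basis vector `u_l = z^a v_j`. -/
def expn (n : ℕ) (l : ℤ) : ℤ := (col n l - l) / (n : ℤ)

/-- The (right) action of the affine Hecke generator `T` on the basis vector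
`u_l ⊗ u_m` of `V(z) ⊗ V(z)`, written in the basis `u_x ⊗ u_y ↔ (x,y)`; this is the
Ginzburg–Reshetikhin–Vasserot action from the paper, translated into the `u`-basis. -/
def Tact {K : Type*} [Field K] (q : K) (n : ℕ) (p : ℤ × ℤ) : (ℤ × ℤ) →₀ K :=
  let l := p.1
  let m := p.2
  let c := col n l
  let c' := col n m
  let a := expn n l
  let b := expn n m
  -- `Q = z₁(z₁^b z₂^a − z₁^a z₂^b)/(z₁−z₂)` written in the `u`-basis
  let Q : (ℤ × ℤ) →₀ K :=
    if a < b then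
      ∑ t ∈ Finset.range (b - a).toNat,
        Finsupp.single (c - (a + 1 + (t : ℤ)) * (n : ℤ), c' - (b - 1 - (t : ℤ)) * (n : ℤ)) (1 : K)
    else
      - ∑ t ∈ Finset.range (a - b).toNat,
        Finsupp.single (c - (b + 1 + (t : ℤ)) * (n : ℤ), c' - (a - 1 - (t : ℤ)) * (n : ℤ)) (1 : K)
  -- `P = (z₁^b z₂^{a+1} − z₁^{a+1} z₂^b)/(z₁−z₂)` written in the `u`-basis
  let P : (ℤ × ℤ) →₀ K :=
    if a < b then
      ∑ t ∈ Finset.range ((b - a).toNat - 1),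
        Finsupp.single (c - (a + 1 + (t : ℤ)) * (n : ℤ), c' - (b - 1 - (t : ℤ)) * (n : ℤ)) (1 : K)
    else
      - ∑ t ∈ Finset.range ((a - b).toNat + 1),
        Finsupp.single (c - (b + (t : ℤ)) * (n : ℤ), c' - (a - (t : ℤ)) * (n : ℤ)) (1 : K)
  if c = c' then - Finsupp.single (m, l) (1 : K) - (q ^ 2 - 1) • Q
  else if c < c' then (-q) • Finsupp.single (m, l) (1 : K) - (q ^ 2 - 1) • P
  else (-q) • Finsupp.single (m, l) (1 : K) - (q ^ 2 - 1) • Q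

/-- The Hecke operator `T` on `V(z) ⊗ V(z)`. -/
def heckeT (K : Type*) [Field K] (q : K) (n : ℕ) :
    ((ℤ × ℤ) →₀ K) →ₗ[K] ((ℤ × ℤ) →₀ K) :=
  Finsupp.lsum K fun p => LinearMap.toSpanSingleton K _ (Tact q n p)

/-! When `l ≡ m (mod n)` the basis vectors `u_l` and `u_m` have the same colour, so `T` acts on
`u_l ⊗ u_m` as `−(swap) − (q² − 1) Q(l, m)`, where the divided difference `Q` is antisymmetric
in `(l, m)`. Hence `T + 1` kills `u_m ⊗ u_l + u_l ⊗ u_m`, and it kills `u_l ⊗ u_l` because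
`Q(l, l) = 0`. -/

section SameColour

/-- The vector `Q` in the definition of `Tact`, as a function of the pair `(l, m)`. -/
def tactQ (K : Type*) [Field K] (n : ℕ) (l m : ℤ) : (ℤ × ℤ) →₀ K :=
  if expn n l < expn n m then
    ∑ t ∈ Finset.range (expn n m - expn n l).toNat,
      Finsupp.single (col n l - (expn n l + 1 + (t : ℤ)) * (n : ℤ),
        col n m - (expn n m - 1 - (t : ℤ)) * (n : ℤ)) (1 : K)
  else
    - ∑ t ∈ Finset.range (expn n l - expn n m).toNat,
      Finsupp.single (col n l - (expn n m + 1 + (t : ℤ)) * (n : ℤ),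
        col n m - (expn n l - 1 - (t : ℤ)) * (n : ℤ)) (1 : K)

variable {K : Type*} [Field K]

theorem tactQ_self (n : ℕ) (l : ℤ) : tactQ K n l l = 0 := by
  simp [tactQ]

theorem tactQ_swap {n : ℕ} {l m : ℤ} (hc : col n l = col n m) :
    tactQ K n m l = - tactQ K n l m := by
  unfold tactQ
  rcases lt_trichotomy (expn n l) (expn n m) with hlt | heq | hgt
  · rw [if_neg (not_lt.2 hlt.le), if_pos hlt, hc]
  · simp [heq]
  · rw [if_pos hgt, if_neg (not_lt.2 hgt.le), hc, neg_neg]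

theorem Tact_of_col_eq (q : K) {n : ℕ} {l m : ℤ} (hc : col n l = col n m) :
    Tact q n (l, m) = - Finsupp.single (m, l) 1 - (q ^ 2 - 1) • tactQ K n l m := by
  simp only [Tact, tactQ]
  rw [if_pos hc]

theorem heckeT_single (q : K) (n : ℕ) (p : ℤ × ℤ) :
    heckeT K q n (Finsupp.single p 1) = Tact q n p := by
  simp [heckeT]

theorem col_eq_of_dvd_sub {n : ℕ} {l m : ℤ} (h : (n : ℤ) ∣ m - l) : col n l = col n m := by
  have hmod : l - 1 ≡ m - 1 [ZMOD n] := ((Int.modEq_iff_dvd).2 h).sub_right 1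
  rw [col, col, hmod]

theorem single_add_single_swap_mem_ker (q : K) {n : ℕ} {l m : ℤ} (hc : col n l = col n m) :
    Finsupp.single (m, l) 1 + Finsupp.single (l, m) 1 ∈
      LinearMap.ker (heckeT K q n + LinearMap.id) := by
  rw [LinearMap.mem_ker, LinearMap.add_apply, LinearMap.id_apply, map_add, heckeT_single,
    heckeT_single, Tact_of_col_eq q hc, Tact_of_col_eq q hc.symm, tactQ_swap hc, smul_neg]
  abel

theorem single_self_mem_ker (q : K) (n : ℕ) (l : ℤ) :
    Finsupp.single (l, l) 1 ∈ LinearMap.ker (heckeT K q n + LinearMap.id) := by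
  rw [LinearMap.mem_ker, LinearMap.add_apply, LinearMap.id_apply, heckeT_single,
    Tact_of_col_eq q rfl, tactQ_self, smul_zero, sub_zero, neg_add_cancel]

end SameColour

theorem stmt11_general {K : Type*} [Field K] (q : K) (n : ℕ) (l m : ℤ)
    (h : (n : ℤ) ∣ (m - l)) :
    (Submodule.Quotient.mk (p := LinearMap.ker (heckeT K q n + LinearMap.id))
        (Finsupp.single ((m, l) : ℤ × ℤ) (1 : K)) =
      - Submodule.Quotient.mk (p := LinearMap.ker (heckeT K q n + LinearMap.id))
        (Finsupp.single ((l, m) : ℤ × ℤ) (1 : K))) ∧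
    Submodule.Quotient.mk (p := LinearMap.ker (heckeT K q n + LinearMap.id))
        (Finsupp.single ((l, l) : ℤ × ℤ) (1 : K)) = 0 := by
  constructor
  · rw [eq_neg_iff_add_eq_zero, ← Submodule.Quotient.mk_add, Submodule.Quotient.mk_eq_zero]
    exact single_add_single_swap_mem_ker q (col_eq_of_dvd_sub h)
  · rw [Submodule.Quotient.mk_eq_zero]
    exact single_self_mem_ker q n l

/-- In the q-wedge quotient `V(z) ∧_q V(z) = (V(z) ⊗ V(z)) / Ker(T+1)`, where
`u_l ∧ u_m` is the image of `u_m ⊗ u_l`, the relation `u_l ∧ u_m = −u_m ∧ u_l` holds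
whenever `l ≡ m (mod n)`; in particular `u_l ∧ u_l = 0`. -/
theorem stmt11 {K : Type*} [Field K] (q : K) (n : ℕ) (hn : 1 ≤ n) (l m : ℤ)
    (h : (n : ℤ) ∣ (m - l)) :
    (Submodule.Quotient.mk (p := LinearMap.ker (heckeT K q n + LinearMap.id))
        (Finsupp.single ((m, l) : ℤ × ℤ) (1 : K)) =
      - Submodule.Quotient.mk (p := LinearMap.ker (heckeT K q n + LinearMap.id))
        (Finsupp.single ((l, m) : ℤ × ℤ) (1 : K))) ∧
    Submodule.Quotient.mk (p := LinearMap.ker (heckeT K q n + LinearMap.id))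
        (Finsupp.single ((l, l) : ℤ × ℤ) (1 : K)) = 0 :=
  stmt11_general q n l m h
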